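/- Let d, q ≥ 1. If every continuous map f : Δ_{d-1}^{(d+1)(q-1)} → ℝ^d admits a winding partition, then every continuous map g : Δ_d^{(d+1)(q-1)} → ℝ^d admits a Tverberg partition {S_1, …, S_q} with |S_i| ≤ d+1 for all i. -/

import Mathlib

open scoped BigOperators

noncomputable section

/-- Euclidean space `ℝ^d`. -/
abbrev Euc (d : ℕ) : Type := EuclideanSpace ℝ (Fin d)

/-- The standard `N`-simplex `Δ^N ⊆ ℝ^{N+1}`. -/
def stdSimp (N : ℕ) : Set (Fin (N+1) → ℝ) :=
  {x | (∀ i, 0 ≤ x i) ∧ ∑ i, x i = 1}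

/-- The face `σ_S` of `Δ^N` spanned by the vertices in `S`. -/
def simpFace {N : ℕ} (S : Finset (Fin (N+1))) : Set (Fin (N+1) → ℝ) :=
  {x ∈ stdSimp N | ∀ i ∉ S, x i = 0}

/-- The `k`-skeleton `Δ_k^N` of the standard `N`-simplex. -/
def skel (N k : ℕ) : Set (Fin (N+1) → ℝ) :=
  {x ∈ stdSimp N | {i | x i ≠ 0}.ncard ≤ k + 1}

/-- A Tverberg partition for (the relevant restriction of) `f`: a set of `q`
pairwise disjoint nonempty vertex subsets whose faces have images with a common point. -/
def IsTverbergPartition (q : ℕ) {N d : ℕ}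
    (f : (Fin (N+1) → ℝ) → Euc d) (P : Finset (Finset (Fin (N+1)))) : Prop :=
  P.card = q ∧ (∀ S ∈ P, S.Nonempty) ∧
  (∀ S ∈ P, ∀ T ∈ P, S ≠ T → Disjoint S T) ∧
  (⋂ S ∈ P, f '' simpFace S).Nonempty

/-- The boundary `∂σ_S` of the face `σ_S`. -/
def simpFaceBoundary {N : ℕ} (S : Finset (Fin (N+1))) : Set (Fin (N+1) → ℝ) :=
  {x ∈ simpFace S | ∃ i ∈ S, x i = 0}

/-- `p ∈ W_{≠0}(f|_{∂σ_S})`: either `p` is in the image of the boundary, or the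
corestriction of `f|_{∂σ_S}` to `ℝ^d \ {p}` is not nullhomotopic (there is no
continuous map agreeing with `f` on `∂σ_S` that is homotopic to a constant). -/
def InWne (d : ℕ) {N : ℕ} (f : (Fin (N+1) → ℝ) → Euc d)
    (S : Finset (Fin (N+1))) (p : Euc d) : Prop :=
  p ∈ f '' simpFaceBoundary S ∨
  ¬ ∃ (g : C(↥(simpFaceBoundary S), ↥({p}ᶜ : Set (Euc d))))
      (y : ↥({p}ᶜ : Set (Euc d))),
      (∀ x : ↥(simpFaceBoundary S), (g x : Euc d) = f ↑x) ∧
      g.Homotopic (ContinuousMap.const _ y)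

/-- A winding partition (in dimension `d`) for `f` defined on the `(d-1)`-skeleton:
`q` pairwise disjoint nonempty vertex subsets, each of size at most `d+1`, together
with a winding point `p`. -/
def IsWindingPartition (d q : ℕ) {N : ℕ}
    (f : (Fin (N+1) → ℝ) → Euc d) (P : Finset (Finset (Fin (N+1)))) : Prop :=
  P.card = q ∧ (∀ S ∈ P, S.Nonempty) ∧ (∀ S ∈ P, S.card ≤ d + 1) ∧
  (∀ S ∈ P, ∀ T ∈ P, S ≠ T → Disjoint S T) ∧
  ∃ p : Euc d, ∀ S ∈ P,
    (S.card ≤ d → p ∈ f '' simpFace S) ∧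
    (S.card = d + 1 → InWne d f S p)

/-!
A winding partition of `g`, restricted to the `(d-1)`-skeleton, is already a Tverberg partition
of `g`. For `|S| ≤ d` there is nothing to show. For `|S| = d + 1`, if the winding point `p` were
not in `g(σ_S)`, then `g|∂σ_S` would extend over the convex, hence contractible, face `σ_S`
inside `ℝ^d \ {p}`, so it would be nullhomotopic there and `p ∉ W_{≠0}`.
-/

theorem convex_simpFace {N : ℕ} (S : Finset (Fin (N+1))) : Convex ℝ (simpFace S) := by
  refine (convex_stdSimplex ℝ (Fin (N+1))).inter fun _ hx _ hy _ _ _ _ _ i hi => ?_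
  simp [hx i hi, hy i hi]

theorem simpFace_nonempty {N : ℕ} {S : Finset (Fin (N+1))} (hS : S.Nonempty) :
    (simpFace S).Nonempty :=
  let ⟨i, hi⟩ := hS
  ⟨Pi.single i 1, single_mem_stdSimplex ℝ i,
    fun _ hj => Pi.single_eq_of_ne (by rintro rfl; exact hj hi) _⟩

theorem simpFace_subset_skel {N k : ℕ} {S : Finset (Fin (N+1))} (hS : S.card ≤ k + 1) :
    simpFace S ⊆ skel N k := fun _ hx =>
  ⟨hx.1, le_trans (Set.ncard_le_ncard (fun i hi => by_contra fun hiS => hi (hx.2 i hiS))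
    S.finite_toSet) ((Set.ncard_coe_finset S).le.trans hS)⟩

theorem skel_mono {N k l : ℕ} (hkl : k ≤ l) : skel N k ⊆ skel N l :=
  fun _ hx => ⟨hx.1, hx.2.trans (by omega)⟩

theorem simpFaceBoundary_subset_simpFace {N : ℕ} (S : Finset (Fin (N+1))) :
    simpFaceBoundary S ⊆ simpFace S := fun _ hx => hx.1

open ContinuousMap in
theorem ContinuousOn.exists_nullhomotopic_restrict_of_convex {E Y : Type*} [AddCommGroup E]
    [Module ℝ E] [TopologicalSpace E] [ContinuousAdd E] [ContinuousSMul ℝ E] [TopologicalSpace Y]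
    {K B : Set E} {U : Set Y} {f : E → Y} (hf : ContinuousOn f K) (hfK : Set.MapsTo f K U)
    (hK : Convex ℝ K) (hKne : K.Nonempty) (hBK : B ⊆ K) :
    ∃ g : C(B, U), (∀ x, (g x : Y) = f x) ∧ g.Nullhomotopic := by
  have := hK.contractibleSpace hKne
  let fK : C(K, U) := ⟨hfK.restrict f K U, hf.mapsToRestrict hfK⟩
  exact ⟨fK.comp ⟨Set.inclusion hBK, continuous_inclusion hBK⟩, fun _ => rfl,
    ((id_nullhomotopic K).comp_right fK).comp_left _⟩

theorem mem_image_simpFace_of_inWne {d N : ℕ} {f : (Fin (N+1) → ℝ) → Euc d}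
    {S : Finset (Fin (N+1))} {p : Euc d} (hf : ContinuousOn f (simpFace S)) (hS : S.Nonempty)
    (hp : InWne d f S p) : p ∈ f '' simpFace S := by
  refine hp.elim (fun h => Set.image_mono (simpFaceBoundary_subset_simpFace S) h) fun hwind => ?_
  by_contra hpf
  obtain ⟨g, hg, y, hy⟩ := hf.exists_nullhomotopic_restrict_of_convex
    (U := {p}ᶜ) (fun x hx hfx => hpf ⟨x, hx, hfx⟩) (convex_simpFace S) (simpFace_nonempty hS)
    (simpFaceBoundary_subset_simpFace S)
  exact hwind ⟨g, y, hg, hy⟩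

theorem IsWindingPartition.isTverbergPartition {d q N : ℕ} {f : (Fin (N+1) → ℝ) → Euc d}
    {P : Finset (Finset (Fin (N+1)))} (hf : ContinuousOn f (skel N d))
    (hP : IsWindingPartition d q f P) : IsTverbergPartition q f P := by
  obtain ⟨hcard, hne, hsize, hdisj, p, hp⟩ := hP
  refine ⟨hcard, hne, hdisj, p, Set.mem_iInter₂.2 fun S hS => ?_⟩
  rcases (hsize S hS).lt_or_eq with hlt | heq
  · exact (hp S hS).1 (Nat.lt_succ_iff.1 hlt)
  · exact mem_image_simpFace_of_inWne (hf.mono (simpFace_subset_skel (hsize S hS))) (hne S hS)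
      ((hp S hS).2 heq)

theorem winding_implies_dSkeleton_general (d q : ℕ)
    (H : ∀ f : (Fin ((d+1)*(q-1)+1) → ℝ) → Euc d,
      ContinuousOn f (skel ((d+1)*(q-1)) (d-1)) →
      ∃ P : Finset (Finset (Fin ((d+1)*(q-1)+1))), IsWindingPartition d q f P) :
    ∀ g : (Fin ((d+1)*(q-1)+1) → ℝ) → Euc d,
      ContinuousOn g (skel ((d+1)*(q-1)) d) →
      ∃ P : Finset (Finset (Fin ((d+1)*(q-1)+1))),
        IsTverbergPartition q g P ∧ ∀ S ∈ P, S.card ≤ d + 1 := by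
  intro g hg
  obtain ⟨P, hP⟩ := H g (hg.mono (skel_mono (Nat.sub_le d 1)))
  exact ⟨P, hP.isTverbergPartition hg, hP.2.2.1⟩

/-- The Winding Number Conjecture implies the `d`-Skeleton Conjecture. -/
theorem winding_implies_dSkeleton (d q : ℕ) (hd : 1 ≤ d) (hq : 1 ≤ q)
    (H : ∀ f : (Fin ((d+1)*(q-1)+1) → ℝ) → Euc d,
      ContinuousOn f (skel ((d+1)*(q-1)) (d-1)) →
      ∃ P : Finset (Finset (Fin ((d+1)*(q-1)+1))), IsWindingPartition d q f P) :
    ∀ g : (Fin ((d+1)*(q-1)+1) → ℝ) → Euc d,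
      ContinuousOn g (skel ((d+1)*(q-1)) d) →
      ∃ P : Finset (Finset (Fin ((d+1)*(q-1)+1))),
        IsTverbergPartition q g P ∧ ∀ S ∈ P, S.card ≤ d + 1 :=
  winding_implies_dSkeleton_general d q H
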